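/- arXiv:1902.01673 — 8 statements merged into one kernel-verified Lean document; each statement's English description precedes it below -/
import Mathlib

section
/- If φ : [0,T) → ℝ is differentiable, satisfies φ(0) = 0, and solves φ'(t) = ε⁻¹(ω(φ(t)) + t − φ(t)) + 1 for a continuous ω : ℝ≥0 → ℝ with ω(0) = 0 and ε > 0, then φ(t) ≥ 0 for all t ∈ [0,T). -/
/-- Any solution of the CIR initial-value problem stays nonnegative. -/
theorem cir_ivp_nonneg (ε T : ℝ) (hε : 0 < ε) (hT : 0 < T)
    (ω φ : ℝ → ℝ) (hω : ContinuousOn ω (Set.Ici 0)) (hω0 : ω 0 = 0)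
    (hφ0 : φ 0 = 0)
    (hode : ∀ t ∈ Set.Ico (0:ℝ) T,
      HasDerivAt φ (ε⁻¹ * (ω (φ t) + t - φ t) + 1) t) :
    ∀ t ∈ Set.Ico (0:ℝ) T, 0 ≤ φ t := by
  intro t ht
  by_contra hneg
  push_neg at hneg
  obtain ⟨ht0, htT⟩ := ht
  -- continuity of φ on [0, t]
  have hcont : ContinuousOn φ (Set.Icc 0 t) := by
    intro u hu
    exact ((hode u ⟨hu.1, lt_of_le_of_lt hu.2 htT⟩).continuousAt).continuousWithinAt
  -- the set of zeros of φ in [0,t]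
  set S : Set ℝ := Set.Icc (0:ℝ) t ∩ φ ⁻¹' {0} with hSdef
  have hSclosed : IsClosed S :=
    hcont.preimage_isClosed_of_isClosed isClosed_Icc isClosed_singleton
  have hSne : S.Nonempty := ⟨0, ⟨le_refl 0, ht0⟩, by simp [hφ0]⟩
  have hSbdd : BddAbove S := BddAbove.mono Set.inter_subset_left (bddAbove_Icc)
  set s : ℝ := sSup S with hsdef
  have hsS : s ∈ S := hSclosed.csSup_mem hSne hSbdd
  obtain ⟨⟨hs0, hst⟩, hsz⟩ := hsS
  have hφs : φ s = 0 := hsz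
  have hsne : s ≠ t := fun h => by rw [h] at hφs; linarith
  have hslt : s < t := lt_of_le_of_ne hst hsne
  -- on (s, t], φ is negative
  have hnegafter : ∀ u ∈ Set.Ioc s t, φ u < 0 := by
    intro u hu
    rcases lt_trichotomy (φ u) 0 with h | h | h
    · exact h
    · exact absurd (le_csSup hSbdd ⟨⟨le_trans hs0 hu.1.le, hu.2⟩, h⟩) (not_le_of_gt hu.1)
    · -- IVT between u and t gives a zero above s, contradiction
      have hut : u ≤ t := hu.2
      have hcont' : ContinuousOn φ (Set.Icc u t) :=
        hcont.mono (Set.Icc_subset_Icc (le_trans hs0 hu.1.le) le_rfl)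
      have : (0:ℝ) ∈ Set.Icc (φ t) (φ u) := ⟨hneg.le, h.le⟩
      obtain ⟨v, hv, hφv⟩ := intermediate_value_Icc' hut hcont' this
      have hvS : v ∈ S := ⟨⟨le_trans (le_trans hs0 hu.1.le) hv.1, hv.2⟩, hφv⟩
      have : v ≤ s := le_csSup hSbdd hvS
      have : u ≤ s := le_trans hv.1 this
      exact absurd this (not_le_of_gt hu.1)
  -- derivative at s is positive
  have hsT : s < T := lt_trans hslt htT
  have hd := hode s ⟨hs0, hsT⟩
  rw [hφs, hω0] at hd
  have hdpos : 0 < ε⁻¹ * (0 + s - 0) + 1 := by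
    have : 0 ≤ ε⁻¹ * s := mul_nonneg (inv_nonneg.mpr hε.le) hs0
    simpa using by linarith [this]
  -- slope is eventually positive to the right of s
  have hslope := (hasDerivAt_iff_tendsto_slope.mp hd).eventually (eventually_gt_nhds hdpos)
  have h1 : ∀ᶠ u in nhdsWithin s (Set.Ioi s), 0 < slope φ s u :=
    hslope.filter_mono (nhdsWithin_mono s (fun x hx => ne_of_gt hx))
  have h2 : ∀ᶠ u in nhdsWithin s (Set.Ioi s), u ∈ Set.Ioc s t := by
    filter_upwards [Ioo_mem_nhdsGT_of_mem (Set.left_mem_Ico.mpr hslt), self_mem_nhdsWithin]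
      with u hu _
    exact ⟨hu.1, hu.2.le⟩
  have : ∀ᶠ u in nhdsWithin s (Set.Ioi s), False := by
    filter_upwards [h1, h2] with u hu1 hu2
    have hgt : s < u := hu2.1
    have : 0 < (φ u - φ s) / (u - s) := by simpa [slope_def_field, div_eq_iff] using hu1
    have h3 : 0 < φ u - φ s := by
      have := mul_pos this (sub_pos.mpr hgt)
      rwa [div_mul_cancel₀] at this
      exact ne_of_gt (sub_pos.mpr hgt)
    have : 0 < φ u := by rw [hφs] at h3; linarith
    exact absurd (hnegafter u hu2) (not_lt_of_gt this)
  have hne : (nhdsWithin s (Set.Ioi s)).NeBot := nhdsGT_neBot s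
  exact (this.exists).elim fun _ h => h
end

section
/- Any solution φ of the CIR initial-value problem on [0,T) is nondecreasing: for 0 ≤ s ≤ t < T, φ(s) ≤ φ(t). -/
open Set Filter Topology

/-- Any solution of the CIR initial-value problem is nondecreasing on [0,T). -/
theorem cir_ivp_monotone (ε T : ℝ) (hε : 0 < ε) (hT : 0 < T)
    (ω φ : ℝ → ℝ) (hω : ContinuousOn ω (Set.Ici 0)) (hω0 : ω 0 = 0)
    (hφ0 : φ 0 = 0)
    (hode : ∀ t ∈ Set.Ico (0:ℝ) T,
      HasDerivAt φ (ε⁻¹ * (ω (φ t) + t - φ t) + 1) t) :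
    ∀ s ∈ Set.Ico (0:ℝ) T, ∀ t ∈ Set.Ico (0:ℝ) T, s ≤ t → φ s ≤ φ t := by
  intro s hs t ht hst
  by_contra hcon
  push_neg at hcon
  have hslt : s < t := hst.lt_of_ne (by rintro rfl; exact lt_irrefl _ hcon)
  have ht0 : 0 < t := lt_of_le_of_lt hs.1 hslt
  have htT : t < T := ht.2
  -- continuity of φ on [0, T)
  have hcA : ∀ r, 0 ≤ r → r < T → ContinuousAt φ r :=
    fun r h1 h2 => (hode r ⟨h1, h2⟩).continuousAt
  have hcont : ∀ a b : ℝ, 0 ≤ a → b < T → ContinuousOn φ (Icc a b) :=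
    fun a b ha hb r hr =>
      (hcA r (le_trans ha hr.1) (lt_of_le_of_lt hr.2 hb)).continuousWithinAt
  -- find s' ∈ [0, t) with φ s' > max (φ t) 0
  obtain ⟨s', hs'0, hs't, hs'pos⟩ : ∃ s', 0 ≤ s' ∧ s' < t ∧ max (φ t) 0 < φ s' := by
    rcases lt_or_ge 0 (φ s) with hpos | hneg
    · exact ⟨s, hs.1, hslt, max_lt hcon hpos⟩
    · -- φ t < φ s ≤ 0; use derivative 1 at 0 to find a positive value
      have hφt : φ t < 0 := lt_of_lt_of_le hcon hneg
      have hd0 : HasDerivAt φ 1 0 := by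
        have h := hode 0 ⟨le_refl _, hT⟩
        rw [hφ0, hω0] at h
        simpa using h
      have hslope : Tendsto (slope φ 0) (𝓝[>] (0:ℝ)) (𝓝 1) :=
        (hasDerivAt_iff_tendsto_slope.mp hd0).mono_left
          (nhdsWithin_mono _ fun x hx => ne_of_gt hx)
      have hev : ∀ᶠ r in 𝓝[>] (0:ℝ),
          0 < slope φ 0 r ∧ r ∈ Ioo 0 t :=
        (hslope.eventually (eventually_gt_nhds one_pos)).and
          (mem_of_superset (Ioo_mem_nhdsGT_of_mem ⟨le_refl _, ht0⟩) fun _ h => h)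
      obtain ⟨r, hr1, hr2⟩ := hev.exists
      refine ⟨r, le_of_lt hr2.1, hr2.2, ?_⟩
      have hr0 : 0 < φ r := by
        have := hr1
        rw [slope_def_field, hφ0] at this
        simp only [sub_zero] at this
        rcases div_pos_iff.mp this with ⟨h1, _⟩ | ⟨h1, h2⟩
        · linarith
        · linarith [hr2.1]
      exact max_lt (lt_trans hφt hr0) hr0
  -- pick level y
  obtain ⟨y, hy1, hy2⟩ := exists_between hs'pos
  have hyt : φ t < y := lt_of_le_of_lt (le_max_left _ _) hy1
  have hy0 : 0 < y := lt_of_le_of_lt (le_max_right _ _) hy1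
  have hs'T : s' < T := lt_trans hs't htT
  -- last crossing of y in [0, s']
  set K1 : Set ℝ := Icc 0 s' ∩ φ ⁻¹' {y} with hK1def
  have hK1cl : IsClosed K1 :=
    (hcont 0 s' (le_refl _) hs'T).preimage_isClosed_of_isClosed isClosed_Icc
      isClosed_singleton
  have hK1cp : IsCompact K1 :=
    isCompact_Icc.of_isClosed_subset hK1cl inter_subset_left
  have hK1ne : K1.Nonempty := by
    have hmem : y ∈ Icc (φ 0) (φ s') := by
      rw [hφ0]; exact ⟨le_of_lt hy0, le_of_lt hy2⟩
    obtain ⟨x, hx1, hx2⟩ := intermediate_value_Icc hs'0 (hcont 0 s' (le_refl _) hs'T) hmem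
    exact ⟨x, hx1, hx2⟩
  obtain ⟨t1, ht1K, ht1ub⟩ := hK1cp.exists_isGreatest hK1ne
  have ht1y : φ t1 = y := ht1K.2
  have ht10 : 0 ≤ t1 := ht1K.1.1
  have ht1s' : t1 < s' := lt_of_le_of_ne ht1K.1.2 (by rintro rfl; exact absurd ht1y (ne_of_gt hy2))
  -- first crossing of y in [s', t]
  set K2 : Set ℝ := Icc s' t ∩ φ ⁻¹' {y} with hK2def
  have hK2cl : IsClosed K2 :=
    (hcont s' t hs'0 htT).preimage_isClosed_of_isClosed isClosed_Icc isClosed_singleton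
  have hK2cp : IsCompact K2 :=
    isCompact_Icc.of_isClosed_subset hK2cl inter_subset_left
  have hK2ne : K2.Nonempty := by
    have hmem : y ∈ Icc (φ t) (φ s') := ⟨le_of_lt hyt, le_of_lt hy2⟩
    obtain ⟨x, hx1, hx2⟩ :=
      intermediate_value_Icc' (le_of_lt hs't) (hcont s' t hs'0 htT) hmem
    exact ⟨x, hx1, hx2⟩
  obtain ⟨t2, ht2K, ht2lb⟩ := hK2cp.exists_isLeast hK2ne
  have ht2y : φ t2 = y := ht2K.2
  have hs't2 : s' < t2 := lt_of_le_of_ne ht2K.1.1 (by rintro rfl; exact absurd ht2y (ne_of_gt hy2))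
  have ht2t : t2 ≤ t := ht2K.1.2
  have ht2T : t2 < T := lt_of_le_of_lt ht2t htT
  -- φ > y strictly inside (t1, s']
  have hA : ∀ r, t1 < r → r ≤ s' → y < φ r := by
    intro r hr1 hr2
    by_contra hle
    push_neg at hle
    have hmem : y ∈ Icc (φ r) (φ s') := ⟨hle, le_of_lt hy2⟩
    obtain ⟨x, hx1, hx2⟩ := intermediate_value_Icc hr2
      ((hcont 0 s' (le_refl _) hs'T).mono (Icc_subset_Icc (le_trans ht10 (le_of_lt hr1)) (le_refl _))) hmem
    have hxK : x ∈ K1 := ⟨⟨le_trans ht10 (le_trans (le_of_lt hr1) hx1.1), hx1.2⟩, hx2⟩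
    exact absurd (ht1ub hxK) (not_le.mpr (lt_of_lt_of_le hr1 hx1.1))
  -- φ > y strictly inside [s', t2)
  have hB : ∀ r, s' ≤ r → r < t2 → y < φ r := by
    intro r hr1 hr2
    by_contra hle
    push_neg at hle
    have hmem : y ∈ Icc (φ r) (φ s') := ⟨hle, le_of_lt hy2⟩
    obtain ⟨x, hx1, hx2⟩ := intermediate_value_Icc' hr1
      ((hcont s' t hs'0 htT).mono (Icc_subset_Icc (le_refl _) (le_trans (le_of_lt hr2) ht2t))) hmem
    have hxK : x ∈ K2 := ⟨⟨hx1.1, le_trans (le_trans hx1.2 (le_of_lt hr2)) ht2t⟩, hx2⟩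
    exact absurd (ht2lb hxK) (not_le.mpr (lt_of_le_of_lt hx1.2 hr2))
  -- derivative at t1 is ≥ 0
  have hd1 : HasDerivAt φ (ε⁻¹ * (ω (φ t1) + t1 - φ t1) + 1) t1 :=
    hode t1 ⟨ht10, lt_trans (lt_of_lt_of_le ht1s' (le_of_lt hs't)) htT⟩
  have hd1ge : 0 ≤ ε⁻¹ * (ω (φ t1) + t1 - φ t1) + 1 := by
    have hsl : Tendsto (slope φ t1) (𝓝[>] t1) (𝓝 (ε⁻¹ * (ω (φ t1) + t1 - φ t1) + 1)) :=
      (hasDerivAt_iff_tendsto_slope.mp hd1).mono_left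
        (nhdsWithin_mono _ fun x hx => ne_of_gt hx)
    have hev : ∀ᶠ r in 𝓝[>] t1, 0 ≤ slope φ t1 r := by
      filter_upwards [Ioc_mem_nhdsGT_of_mem ⟨le_refl _, ht1s'⟩] with r hr
      rw [slope_def_field, ht1y]
      exact le_of_lt (div_pos (sub_pos.mpr (hA r hr.1 hr.2)) (sub_pos.mpr hr.1))
    exact ge_of_tendsto hsl hev
  -- derivative at t2 is ≤ 0
  have hd2 : HasDerivAt φ (ε⁻¹ * (ω (φ t2) + t2 - φ t2) + 1) t2 :=
    hode t2 ⟨le_trans hs'0 (le_of_lt hs't2), ht2T⟩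
  have hd2le : ε⁻¹ * (ω (φ t2) + t2 - φ t2) + 1 ≤ 0 := by
    have hsl : Tendsto (slope φ t2) (𝓝[<] t2) (𝓝 (ε⁻¹ * (ω (φ t2) + t2 - φ t2) + 1)) :=
      (hasDerivAt_iff_tendsto_slope.mp hd2).mono_left
        (nhdsWithin_mono _ fun x hx => ne_of_lt hx)
    have hev : ∀ᶠ r in 𝓝[<] t2, slope φ t2 r ≤ 0 := by
      filter_upwards [Ico_mem_nhdsLT_of_mem ⟨hs't2, le_refl _⟩] with r hr
      rw [slope_def_field, ht2y]
      exact le_of_lt (div_neg_of_pos_of_neg (sub_pos.mpr (hB r hr.1 hr.2)) (sub_neg.mpr hr.2))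
    exact le_of_tendsto hsl hev
  -- contradiction from the ODE
  have ht1t2 : t1 < t2 := lt_trans ht1s' hs't2
  rw [ht1y] at hd1ge
  rw [ht2y] at hd2le
  nlinarith [mul_pos (inv_pos.mpr hε) (sub_pos.mpr ht1t2)]
end

section
/- If φ₁ and φ₂ both solve the CIR initial-value problem on [0,T), then φ₁ = φ₂ on [0,T). -/
/-!
If the right-hand side `f t x` of `x' = f t x` is strictly increasing in `t`, then for every
`δ > 0` the shifted solution `t ↦ φ₂ (t + δ)` is a strict supersolution: wherever it touches
`φ₁`, its slope exceeds that of `φ₁`. By the fencing theorem it stays above `φ₁` as soon as it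
starts above it, and letting `δ → 0` gives `φ₁ ≤ φ₂`. For the CIR equation
`∂ₜ f = ε⁻¹ > 0`, and both initial comparisons follow from `φᵢ 0 = 0 ≤ φⱼ`, so the two
solutions coincide.
-/

open Set Filter Topology

section TimeMonotoneODE

variable {f : ℝ → ℝ → ℝ} {φ₁ φ₂ : ℝ → ℝ} {a b : ℝ}

theorem le_comp_add_of_hasDerivAt_of_strictMono_time (hf : ∀ x, StrictMono (f · x))
    (h₁ : ∀ t ∈ Ico a b, HasDerivAt φ₁ (f t (φ₁ t)) t)
    (h₂ : ∀ t ∈ Ico a b, HasDerivAt φ₂ (f t (φ₂ t)) t)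
    {δ : ℝ} (hδ : 0 < δ) (hinit : φ₁ a ≤ φ₂ (a + δ)) :
    ∀ t ∈ Ico a (b - δ), φ₁ t ≤ φ₂ (t + δ) := by
  rintro t ⟨hat, htb⟩
  have hmem₁ : ∀ s ∈ Icc a t, s ∈ Ico a b := fun s hs => ⟨hs.1, by linarith [hs.2]⟩
  have hmem₂ : ∀ s ∈ Icc a t, s + δ ∈ Ico a b := fun s hs =>
    ⟨by linarith [hs.1], by linarith [hs.2]⟩
  have hshift : ∀ s ∈ Icc a t, HasDerivAt (φ₂ <| · + δ) (f (s + δ) (φ₂ (s + δ))) s :=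
    fun s hs => (h₂ _ (hmem₂ s hs)).comp_add_const s δ
  refine image_le_of_deriv_right_lt_deriv_boundary'
    (fun s hs => (h₁ s (hmem₁ s hs)).continuousAt.continuousWithinAt)
    (fun s hs => (h₁ s (hmem₁ s (Ico_subset_Icc_self hs))).hasDerivWithinAt) hinit
    (fun s hs => (hshift s hs).continuousAt.continuousWithinAt)
    (fun s hs => (hshift s (Ico_subset_Icc_self hs)).hasDerivWithinAt) ?_ ⟨hat, le_rfl⟩
  intro s _ htouch
  rw [htouch]
  exact hf _ (lt_add_of_pos_right s hδ)

theorem le_of_hasDerivAt_of_strictMono_time (hf : ∀ x, StrictMono (f · x))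
    (h₁ : ∀ t ∈ Ico a b, HasDerivAt φ₁ (f t (φ₁ t)) t)
    (h₂ : ∀ t ∈ Ico a b, HasDerivAt φ₂ (f t (φ₂ t)) t)
    (hinit : ∀ s ∈ Ioo a b, φ₁ a ≤ φ₂ s) :
    ∀ t ∈ Ico a b, φ₁ t ≤ φ₂ t := by
  rintro t ⟨hat, htb⟩
  have htend_add : Tendsto (t + ·) (𝓝[>] 0) (𝓝 t) :=
    ((continuous_const_add t).tendsto' 0 t (add_zero t)).mono_left nhdsWithin_le_nhds
  have hlim : Tendsto (φ₂ <| t + ·) (𝓝[>] 0) (𝓝 (φ₂ t)) :=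
    (h₂ t ⟨hat, htb⟩).continuousAt.tendsto.comp htend_add
  refine ge_of_tendsto hlim ?_
  filter_upwards [Ioo_mem_nhdsGT (sub_pos.mpr htb)] with δ ⟨hδ, hδb⟩
  exact le_comp_add_of_hasDerivAt_of_strictMono_time hf h₁ h₂ hδ
    (hinit _ ⟨by linarith, by linarith⟩) t ⟨hat, by linarith⟩

end TimeMonotoneODE

theorem cir_ivp_unique_general (ε T : ℝ) (hε : 0 < ε)
    (ω φ₁ φ₂ : ℝ → ℝ)
    (hφ₁0 : φ₁ 0 = 0) (hφ₂0 : φ₂ 0 = 0)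
    (hφ₁pos : ∀ t ∈ Set.Ico (0:ℝ) T, 0 ≤ φ₁ t)
    (hφ₂pos : ∀ t ∈ Set.Ico (0:ℝ) T, 0 ≤ φ₂ t)
    (hode₁ : ∀ t ∈ Set.Ico (0:ℝ) T,
      HasDerivAt φ₁ (ε⁻¹ * (ω (φ₁ t) + t - φ₁ t) + 1) t)
    (hode₂ : ∀ t ∈ Set.Ico (0:ℝ) T,
      HasDerivAt φ₂ (ε⁻¹ * (ω (φ₂ t) + t - φ₂ t) + 1) t) :
    ∀ t ∈ Set.Ico (0:ℝ) T, φ₁ t = φ₂ t := by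
  have hf : ∀ x, StrictMono fun t => ε⁻¹ * (ω x + t - x) + 1 := fun x s t hst => by
    have := inv_pos.mpr hε
    dsimp only
    gcongr
  have hinit {φ ψ : ℝ → ℝ} (hφ0 : φ 0 = 0) (hψpos : ∀ t ∈ Ico (0:ℝ) T, 0 ≤ ψ t) :
      ∀ s ∈ Ioo 0 T, φ 0 ≤ ψ s := fun s hs => by
    rw [hφ0]; exact hψpos s (Ioo_subset_Ico_self hs)
  intro t ht
  exact le_antisymm
    (le_of_hasDerivAt_of_strictMono_time hf hode₁ hode₂ (hinit hφ₁0 hφ₂pos) t ht)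
    (le_of_hasDerivAt_of_strictMono_time hf hode₂ hode₁ (hinit hφ₂0 hφ₁pos) t ht)

/-- Uniqueness of solutions of the CIR initial-value problem on [0,T). -/
theorem cir_ivp_unique (ε T : ℝ) (hε : 0 < ε) (hT : 0 < T)
    (ω φ₁ φ₂ : ℝ → ℝ) (hω : ContinuousOn ω (Set.Ici 0)) (hω0 : ω 0 = 0)
    (hφ₁0 : φ₁ 0 = 0) (hφ₂0 : φ₂ 0 = 0)
    (hφ₁pos : ∀ t ∈ Set.Ico (0:ℝ) T, 0 ≤ φ₁ t)
    (hφ₂pos : ∀ t ∈ Set.Ico (0:ℝ) T, 0 ≤ φ₂ t)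
    (hode₁ : ∀ t ∈ Set.Ico (0:ℝ) T,
      HasDerivAt φ₁ (ε⁻¹ * (ω (φ₁ t) + t - φ₁ t) + 1) t)
    (hode₂ : ∀ t ∈ Set.Ico (0:ℝ) T,
      HasDerivAt φ₂ (ε⁻¹ * (ω (φ₂ t) + t - φ₂ t) + 1) t) :
    ∀ t ∈ Set.Ico (0:ℝ) T, φ₁ t = φ₂ t :=
  cir_ivp_unique_general ε T hε ω φ₁ φ₂ hφ₁0 hφ₂0 hφ₁pos hφ₂pos hode₁ hode₂
end

section
/- Let φ : [0,T) → [0,∞) solve the CIR IVP and suppose φ is bijective onto [0,∞) with inverse φ̂. Then for every x ≥ 0, φ̂(x) ≥ sup_{0 ≤ u ≤ x} (u − ω(u)) − ε. -/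
/-- lower bound in time for the inverse of a bijective CIR IVP solution:
`φ̂(x) ≥ sup_{0 ≤ u ≤ x} (u − ω(u)) − ε`. -/
theorem cir_ivp_inverse_lower_bound (ε T : ℝ) (hε : 0 < ε) (hT : 0 < T)
    (ω φ φhat : ℝ → ℝ) (hω : ContinuousOn ω (Set.Ici 0)) (hω0 : ω 0 = 0)
    (hφ0 : φ 0 = 0)
    (hode : ∀ t ∈ Set.Ico (0:ℝ) T,
      HasDerivAt φ (ε⁻¹ * (ω (φ t) + t - φ t) + 1) t)
    (hbij : Set.BijOn φ (Set.Ico 0 T) (Set.Ici 0))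
    (hinv : ∀ x ∈ Set.Ici (0:ℝ), φ (φhat x) = x ∧ φhat x ∈ Set.Ico 0 T) :
    ∀ x : ℝ, 0 ≤ x →
      sSup {y : ℝ | ∃ u ∈ Set.Icc (0:ℝ) x, y = u - ω u} - ε ≤ φhat x := by
  -- continuity of φ on [0,T)
  have hcont : ContinuousOn φ (Set.Ico 0 T) := fun t ht =>
    (hode t ht).continuousAt.continuousWithinAt
  -- φ is strictly monotone on each [0,b] ⊆ [0,T)
  have hmono : ∀ b ∈ Set.Ico (0:ℝ) T, StrictMonoOn φ (Set.Icc 0 b) := by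
    intro b hb
    have hsub : Set.Icc (0:ℝ) b ⊆ Set.Ico 0 T :=
      fun s hs => ⟨hs.1, lt_of_le_of_lt hs.2 hb.2⟩
    refine ContinuousOn.strictMonoOn_of_injOn_Icc hb.1 ?_ (hcont.mono hsub)
      (hbij.injOn.mono hsub)
    have : φ b ∈ Set.Ici (0:ℝ) := hbij.mapsTo hb
    simpa [hφ0] using this
  -- key pointwise bound: φ t − ω(φ t) ≤ t + ε for t ∈ [0,T)
  have hkey : ∀ t ∈ Set.Ico (0:ℝ) T, φ t - ω (φ t) ≤ t + ε := by
    intro t ht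
    have hd : 0 ≤ ε⁻¹ * (ω (φ t) + t - φ t) + 1 := by
      have htend := (hode t ht).hasDerivWithinAt (s := Set.Ioi t)
      rw [hasDerivWithinAt_iff_tendsto_slope] at htend
      have hne : Set.Ioi t \ {t} = Set.Ioi t := by
        ext s
        simp only [Set.mem_diff, Set.mem_Ioi, Set.mem_singleton_iff, and_iff_left_iff_imp]
        intro hs; exact ne_of_gt hs
      rw [hne] at htend
      refine ge_of_tendsto htend ?_
      filter_upwards [Ioo_mem_nhdsGT_of_mem ⟨le_refl t, ht.2⟩] with s hs
      have hsm := hmono s ⟨le_trans ht.1 (le_of_lt hs.1), hs.2⟩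
      have hlt : φ t < φ s :=
        hsm ⟨ht.1, le_of_lt hs.1⟩ ⟨le_trans ht.1 (le_of_lt hs.1), le_refl s⟩ hs.1
      have : 0 ≤ (φ s - φ t) / (s - t) :=
        div_nonneg (by linarith) (by linarith [hs.1])
      simpa [slope_def_field, div_eq_inv_mul] using this
    have h2 : -ε ≤ ω (φ t) + t - φ t := by
      have h3 : 0 ≤ ε * (ε⁻¹ * (ω (φ t) + t - φ t) + 1) := mul_nonneg hε.le hd
      rw [mul_add, ← mul_assoc, mul_inv_cancel₀ (ne_of_gt hε)] at h3
      linarith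
    linarith
  intro x hx
  obtain ⟨hφx, hmem⟩ := hinv x hx
  rw [sub_le_iff_le_add]
  have h0mem : (0:ℝ) ∈ {y : ℝ | ∃ u ∈ Set.Icc (0:ℝ) x, y = u - ω u} :=
    ⟨0, ⟨le_refl 0, hx⟩, by simp [hω0]⟩
  refine csSup_le ⟨0, h0mem⟩ ?_
  rintro y ⟨u, hu, rfl⟩
  -- find s ∈ [0, φhat x] with φ s = u
  have hsub : Set.Icc (0:ℝ) (φhat x) ⊆ Set.Ico 0 T :=
    fun s hs => ⟨hs.1, lt_of_le_of_lt hs.2 hmem.2⟩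
  have hIVT := intermediate_value_Icc hmem.1 (hcont.mono hsub)
  have hu' : u ∈ Set.Icc (φ 0) (φ (φhat x)) := by rw [hφ0, hφx]; exact hu
  obtain ⟨s, hs, hsu⟩ := hIVT hu'
  have := hkey s (hsub hs)
  rw [← hsu]
  linarith [hs.2]
end

section
/- Let φ : [0,T) → [0,∞) solve the CIR IVP and be bijective with inverse φ̂. Then for every x ≥ 0, φ̂(x) ≤ sup_{0 ≤ u ≤ x} (u − ω(u)) + 2√(xε). -/
/-!
Let `t = φ̂(x)` and `S = sup_{0 ≤ u ≤ x} (u − ω(u)) ≥ 0`. Being continuous and injective with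
`φ(0) = 0 ≤ φ`, the solution maps `[0, t]` into `[0, x]`, so on `[S, t]` the equation gives
`φ'(s) ≥ ε⁻¹ (s − φ(s) + ω(φ(s))) ≥ ε⁻¹ (s − S)`. Integrating from `S` to `t`,
`x ≥ φ(t) − φ(S) ≥ (t − S)² / (2ε)`, hence `t − S ≤ √(2xε) ≤ 2√(xε)`.
-/

open Set

lemma le_sSup_of_continuousOn_Icc {f : ℝ → ℝ} {a b u : ℝ} (hf : ContinuousOn f (Icc a b))
    (hu : u ∈ Icc a b) : f u ≤ sSup {y : ℝ | ∃ v ∈ Icc a b, y = f v} := by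
  have hset : {y : ℝ | ∃ v ∈ Icc a b, y = f v} = f '' Icc a b := by
    ext y
    exact ⟨fun ⟨v, hv, hy⟩ => ⟨v, hv, hy.symm⟩, fun ⟨v, hv, hy⟩ => ⟨v, hv, hy.symm⟩⟩
  rw [hset]
  exact le_csSup (isCompact_Icc.image_of_continuousOn hf).bddAbove (mem_image_of_mem f hu)

lemma mapsTo_Icc_of_injOn_of_le {f : ℝ → ℝ} {a b : ℝ} (hf : ContinuousOn f (Icc a b))
    (hinj : InjOn f (Icc a b)) (hle : ∀ s ∈ Icc a b, f a ≤ f s) :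
    MapsTo f (Icc a b) (Icc (f a) (f b)) := by
  intro s hs
  refine ⟨hle s hs, not_lt.1 fun hlt => ?_⟩
  -- otherwise the intermediate value theorem on `[a, s]` hits `f b` a second time
  have hsub : Icc a s ⊆ Icc a b := Icc_subset_Icc_right hs.2
  obtain ⟨c, hc, hfc⟩ := intermediate_value_Icc hs.1 (hf.mono hsub)
    ⟨hle b ⟨hs.1.trans hs.2, le_rfl⟩, hlt.le⟩
  have hcb : c = b := hinj (hsub hc) (right_mem_Icc.2 (hs.1.trans hs.2)) hfc
  exact hlt.ne (by rw [le_antisymm hs.2 (hcb ▸ hc.2)])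

lemma mul_sq_div_two_le_sub_of_hasDerivAt {f f' : ℝ → ℝ} {a b c : ℝ} (hab : a ≤ b)
    (hf : ∀ s ∈ Icc a b, HasDerivAt f (f' s) s) (hf' : ∀ s ∈ Ioo a b, c * (s - a) ≤ f' s) :
    c * (b - a) ^ 2 / 2 ≤ f b - f a := by
  set g : ℝ → ℝ := fun s => f s - c * (s - a) ^ 2 / 2
  have hg : ∀ s ∈ Icc a b, HasDerivAt g (f' s - c * (s - a)) s := fun s hs =>
    (hf s hs).sub ((((hasDerivAt_id' s).sub_const a).fun_pow 2).const_mul c |>.div_const 2)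
      |>.congr_deriv (by simp only [Nat.cast_ofNat, mul_one]; ring)
  have hmono : MonotoneOn g (Icc a b) :=
    monotoneOn_of_hasDerivWithinAt_nonneg (convex_Icc a b)
      (fun s hs => (hg s hs).continuousAt.continuousWithinAt)
      (fun s hs => (hg s (interior_subset hs)).hasDerivWithinAt)
      (fun s hs => sub_nonneg.2 (hf' s (by rwa [interior_Icc] at hs)))
  have := hmono (left_mem_Icc.2 hab) (right_mem_Icc.2 hab) hab
  simp only [g, sub_self] at this
  linarith

lemma le_two_mul_sqrt_of_inv_mul_sq_div_two_le {d x ε : ℝ} (hε : 0 < ε)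
    (h : ε⁻¹ * d ^ 2 / 2 ≤ x) : d ≤ 2 * √(x * ε) := by
  have hsq : d ^ 2 ≤ 2 * (x * ε) := by
    rw [inv_mul_eq_div, div_div, div_le_iff₀ (by positivity)] at h
    linarith
  have hhalf : d / 2 ≤ √(x * ε) := Real.le_sqrt_of_sq_le (by nlinarith [sq_nonneg d])
  linarith

theorem cir_ivp_inverse_upper_bound_general (ε T : ℝ) (hε : 0 < ε)
    (ω φ φhat : ℝ → ℝ) (hω : ContinuousOn ω (Set.Ici 0)) (hω0 : ω 0 = 0)
    (hφ0 : φ 0 = 0)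
    (hode : ∀ t ∈ Set.Ico (0:ℝ) T,
      HasDerivAt φ (ε⁻¹ * (ω (φ t) + t - φ t) + 1) t)
    (hbij : Set.BijOn φ (Set.Ico 0 T) (Set.Ici 0))
    (hinv : ∀ x ∈ Set.Ici (0:ℝ), φ (φhat x) = x ∧ φhat x ∈ Set.Ico 0 T) :
    ∀ x : ℝ, 0 ≤ x →
      φhat x ≤ sSup {y : ℝ | ∃ u ∈ Set.Icc (0:ℝ) x, y = u - ω u}
        + 2 * Real.sqrt (x * ε) := by
  intro x hx
  obtain ⟨hφt, ht0, htT⟩ := hinv x hx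
  set t := φhat x
  set S := sSup {y : ℝ | ∃ u ∈ Set.Icc (0:ℝ) x, y = u - ω u}
  have hsub : Icc 0 t ⊆ Ico 0 T := fun s hs => ⟨hs.1, hs.2.trans_lt htT⟩
  have hmaps : MapsTo φ (Icc 0 t) (Icc 0 x) := by
    simpa only [hφ0, hφt] using mapsTo_Icc_of_injOn_of_le
      (fun s hs => (hode s (hsub hs)).continuousAt.continuousWithinAt)
      (hbij.injOn.mono hsub) fun s hs => by
        rw [hφ0]; exact hbij.mapsTo (hsub hs)
  have hS : ∀ u ∈ Icc 0 x, u - ω u ≤ S :=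
    fun u => le_sSup_of_continuousOn_Icc (continuousOn_id.sub (hω.mono fun u hu => hu.1))
  have hS0 : 0 ≤ S := by simpa [hω0] using hS 0 ⟨le_rfl, hx⟩
  rcases le_or_gt t S with hle | hSt
  · linarith [Real.sqrt_nonneg (x * ε)]
  have hsub' : Icc S t ⊆ Icc 0 t := Icc_subset_Icc_left hS0
  have hslope : ∀ s ∈ Ioo S t, ε⁻¹ * (s - S) ≤ ε⁻¹ * (ω (φ s) + s - φ s) + 1 := fun s hs => by
    have hφs := hS _ (hmaps (hsub' (Ioo_subset_Icc_self hs)))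
    have : ε⁻¹ * (s - S) ≤ ε⁻¹ * (ω (φ s) + s - φ s) :=
      mul_le_mul_of_nonneg_left (by linarith) (inv_nonneg.2 hε.le)
    exact this.trans (le_add_of_nonneg_right zero_le_one)
  have hgrowth := mul_sq_div_two_le_sub_of_hasDerivAt hSt.le
    (fun s hs => hode s (hsub (hsub' hs))) hslope
  have hφS := (hmaps (hsub' (left_mem_Icc.2 hSt.le))).1
  have hgap := le_two_mul_sqrt_of_inv_mul_sq_div_two_le hε (d := t - S) (x := x) (by linarith)
  linarith

/-- upper bound in time for the inverse of a bijective CIR IVP solution: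
`φ̂(x) ≤ sup_{0 ≤ u ≤ x} (u − ω(u)) + 2√(xε)`. -/
theorem cir_ivp_inverse_upper_bound (ε T : ℝ) (hε : 0 < ε) (hT : 0 < T)
    (ω φ φhat : ℝ → ℝ) (hω : ContinuousOn ω (Set.Ici 0)) (hω0 : ω 0 = 0)
    (hφ0 : φ 0 = 0)
    (hode : ∀ t ∈ Set.Ico (0:ℝ) T,
      HasDerivAt φ (ε⁻¹ * (ω (φ t) + t - φ t) + 1) t)
    (hbij : Set.BijOn φ (Set.Ico 0 T) (Set.Ici 0))
    (hinv : ∀ x ∈ Set.Ici (0:ℝ), φ (φhat x) = x ∧ φhat x ∈ Set.Ico 0 T) :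
    ∀ x : ℝ, 0 ≤ x →
      φhat x ≤ sSup {y : ℝ | ∃ u ∈ Set.Icc (0:ℝ) x, y = u - ω u}
        + 2 * Real.sqrt (x * ε) :=
  cir_ivp_inverse_upper_bound_general ε T hε ω φ φhat hω hω0 hφ0 hode hbij hinv
end

section
/- Suppose g : ℝ × [a,b] → ℝ is continuous and for each fixed t the map x ↦ g(t,x) is nonincreasing (on [a,b]). Then the IVP x'(t) = g(t, x(t)), x(0) = x₀ has at most one solution on any interval [0,T). -/
/-- Peano uniqueness: if `g` is continuous and nonincreasing in the
spatial variable on `[a,b]`, the IVP `x' = g(t,x)`, `x(0) = x₀` has at most one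
solution on `[0,T)`. -/
theorem peano_uniqueness (a b T x₀ : ℝ) (hT : 0 < T)
    (g : ℝ → ℝ → ℝ)
    (hg : ContinuousOn (fun p : ℝ × ℝ => g p.1 p.2) (Set.univ ×ˢ Set.Icc a b))
    (hmono : ∀ t : ℝ, ∀ x ∈ Set.Icc a b, ∀ y ∈ Set.Icc a b, x ≤ y → g t y ≤ g t x)
    (x₁ x₂ : ℝ → ℝ)
    (hx₁0 : x₁ 0 = x₀) (hx₂0 : x₂ 0 = x₀)
    (hmem₁ : ∀ t ∈ Set.Ico (0:ℝ) T, x₁ t ∈ Set.Icc a b)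
    (hmem₂ : ∀ t ∈ Set.Ico (0:ℝ) T, x₂ t ∈ Set.Icc a b)
    (hode₁ : ∀ t ∈ Set.Ico (0:ℝ) T, HasDerivAt x₁ (g t (x₁ t)) t)
    (hode₂ : ∀ t ∈ Set.Ico (0:ℝ) T, HasDerivAt x₂ (g t (x₂ t)) t) :
    ∀ t ∈ Set.Ico (0:ℝ) T, x₁ t = x₂ t := by
  set ρ : ℝ → ℝ := fun t => (x₁ t - x₂ t) ^ 2 with hρ
  have hderiv : ∀ t ∈ Set.Ico (0:ℝ) T,
      HasDerivAt ρ ((2:ℕ) * (x₁ t - x₂ t) ^ 1 * (g t (x₁ t) - g t (x₂ t))) t := by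
    intro t ht
    exact ((hode₁ t ht).sub (hode₂ t ht)).pow 2
  have hnonpos : ∀ t ∈ Set.Ico (0:ℝ) T,
      (2:ℕ) * (x₁ t - x₂ t) ^ 1 * (g t (x₁ t) - g t (x₂ t)) ≤ 0 := by
    intro t ht
    push_cast
    rcases le_total (x₁ t) (x₂ t) with h | h
    · have hg' : g t (x₂ t) ≤ g t (x₁ t) := hmono t _ (hmem₁ t ht) _ (hmem₂ t ht) h
      nlinarith
    · have hg' : g t (x₁ t) ≤ g t (x₂ t) := hmono t _ (hmem₂ t ht) _ (hmem₁ t ht) h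
      nlinarith
  have hanti : AntitoneOn ρ (Set.Ico 0 T) := by
    apply antitoneOn_of_deriv_nonpos (convex_Ico 0 T)
    · intro t ht
      exact (hderiv t ht).continuousAt.continuousWithinAt
    · intro t ht
      rw [interior_Ico] at ht
      exact (hderiv t ⟨le_of_lt ht.1, ht.2⟩).differentiableAt.differentiableWithinAt
    · intro t ht
      rw [interior_Ico] at ht
      have ht' : t ∈ Set.Ico (0:ℝ) T := ⟨le_of_lt ht.1, ht.2⟩
      rw [(hderiv t ht').deriv]
      exact hnonpos t ht'
  intro t ht
  have h0 : (0:ℝ) ∈ Set.Ico (0:ℝ) T := ⟨le_refl _, hT⟩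
  have hle : ρ t ≤ ρ 0 := hanti h0 ht ht.1
  have hρ0 : ρ 0 = 0 := by simp [hρ, hx₁0, hx₂0]
  have hge : 0 ≤ ρ t := sq_nonneg _
  have : ρ t = 0 := le_antisymm (by linarith) hge
  have := pow_eq_zero_iff (n := 2) (by norm_num) |>.mp this
  linarith [sub_eq_zero.mp this]
end

section
/- Let φ solve the CIR IVP on [0,T) and let t ∈ [0,T). Then φ(t) − ω(φ(t)) ≤ t + ε; equivalently, the solution never rises strictly above the curve x − ω(x) = t + ε. -/
open Set Filter Topology

private lemma cir_eventually_gt_right {f : ℝ → ℝ} {d x : ℝ} (hf : HasDerivAt f d x)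
    (hd : 0 < d) : ∀ᶠ t in 𝓝[>] x, f x < f t := by
  have h := hasDerivAt_iff_tendsto_slope.1 hf
  have h2 : ∀ᶠ t in 𝓝[≠] x, 0 < slope f x t := h.eventually (eventually_gt_nhds hd)
  have h3 : 𝓝[>] x ≤ 𝓝[≠] x :=
    nhdsWithin_mono _ fun t ht => by simpa using ne_of_gt ht
  filter_upwards [h3 h2, self_mem_nhdsWithin] with t ht hts
  rw [slope_def_field] at ht
  have hx : (0:ℝ) < t - x := sub_pos.2 hts
  have h4 := mul_pos ht hx
  rw [div_mul_cancel₀ _ (ne_of_gt hx)] at h4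
  linarith

private lemma cir_phi_nonneg (ε T : ℝ) (hε : 0 < ε) (ω φ : ℝ → ℝ) (hω0 : ω 0 = 0)
    (hφ0 : φ 0 = 0)
    (hode : ∀ t ∈ Set.Ico (0:ℝ) T,
      HasDerivAt φ (ε⁻¹ * (ω (φ t) + t - φ t) + 1) t) :
    ∀ t ∈ Set.Ico (0:ℝ) T, 0 ≤ φ t := by
  intro t₀ ht₀
  by_contra hneg
  push_neg at hneg
  obtain ⟨ht₀0, ht₀T⟩ := ht₀
  have hcont : ContinuousOn φ (Icc 0 t₀) := fun t ht =>
    ((hode t ⟨ht.1, lt_of_le_of_lt ht.2 ht₀T⟩).continuousAt).continuousWithinAt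
  set Z : Set ℝ := Icc 0 t₀ ∩ φ ⁻¹' {0} with hZ
  have hZc : IsClosed Z := hcont.preimage_isClosed_of_isClosed isClosed_Icc isClosed_singleton
  have hZne : Z.Nonempty := ⟨0, ⟨le_refl 0, ht₀0⟩, hφ0⟩
  have hZcp : IsCompact Z := isCompact_Icc.of_isClosed_subset hZc inter_subset_left
  set s := sSup Z with hs
  have hsZ : s ∈ Z := hZcp.sSup_mem hZne
  have hφs : φ s = 0 := hsZ.2
  have hs0 : 0 ≤ s := hsZ.1.1
  have hst : s ≤ t₀ := hsZ.1.2
  have hslt : s < t₀ := lt_of_le_of_ne hst (fun h => by rw [h] at hφs; linarith)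
  have key : ∀ t ∈ Ioc s t₀, φ t < 0 := by
    intro t ht
    by_contra hge
    push_neg at hge
    have h0t : (0:ℝ) ≤ t := hs0.trans ht.1.le
    have h0 : (0:ℝ) ∈ Icc (φ t₀) (φ t) := ⟨hneg.le, hge⟩
    obtain ⟨r, hr, hφr⟩ := intermediate_value_Icc' ht.2
      (hcont.mono (Icc_subset_Icc h0t le_rfl)) h0
    have hrZ : r ∈ Z := ⟨⟨h0t.trans hr.1, hr.2⟩, hφr⟩
    have : r ≤ s := le_csSup hZcp.bddAbove hrZ
    have : s < r := lt_of_lt_of_le ht.1 hr.1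
    linarith
  have hds : HasDerivAt φ (ε⁻¹ * (ω (φ s) + s - φ s) + 1) s :=
    hode s ⟨hs0, lt_of_le_of_lt hst ht₀T⟩
  have hdpos : 0 < ε⁻¹ * (ω (φ s) + s - φ s) + 1 := by
    rw [hφs, hω0]
    have : 0 ≤ ε⁻¹ * (0 + s - 0) := mul_nonneg (by positivity) (by linarith)
    linarith
  have hev := (cir_eventually_gt_right hds hdpos).and
    (Ioc_mem_nhdsGT_of_mem ⟨le_refl s, hslt⟩)
  obtain ⟨t, hgt, htI⟩ := hev.exists
  have := key t htI
  rw [hφs] at hgt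
  linarith

/-- a CIR IVP solution never rises strictly above the curve
`x − ω(x) = t + ε`: for all `t ∈ [0,T)`, `φ(t) − ω(φ(t)) ≤ t + ε`. -/
theorem cir_ivp_barrier (ε T : ℝ) (hε : 0 < ε) (hT : 0 < T)
    (ω φ : ℝ → ℝ) (hω : ContinuousOn ω (Set.Ici 0)) (hω0 : ω 0 = 0)
    (hφ0 : φ 0 = 0)
    (hode : ∀ t ∈ Set.Ico (0:ℝ) T,
      HasDerivAt φ (ε⁻¹ * (ω (φ t) + t - φ t) + 1) t) :
    ∀ t ∈ Set.Ico (0:ℝ) T, φ t - ω (φ t) ≤ t + ε := by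
  intro t₀ ht₀
  by_contra hc
  push_neg at hc
  obtain ⟨ht₀0, ht₀T⟩ := ht₀
  have hcont : ContinuousOn φ (Icc 0 t₀) := fun t ht =>
    ((hode t ⟨ht.1, lt_of_le_of_lt ht.2 ht₀T⟩).continuousAt).continuousWithinAt
  have hx₀nn : 0 ≤ φ t₀ := cir_phi_nonneg ε T hε ω φ hω0 hφ0 hode t₀ ⟨ht₀0, ht₀T⟩
  have hx₀pos : 0 < φ t₀ := by
    rcases hx₀nn.lt_or_eq with h | h
    · exact h
    · exfalso; rw [← h, hω0] at hc; linarith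
  set x₀ := φ t₀ with hx₀
  set S : Set ℝ := Icc 0 t₀ ∩ φ ⁻¹' {x₀} with hS
  have hSc : IsClosed S := hcont.preimage_isClosed_of_isClosed isClosed_Icc isClosed_singleton
  have hSne : S.Nonempty := ⟨t₀, ⟨ht₀0, le_refl t₀⟩, rfl⟩
  have hScp : IsCompact S := isCompact_Icc.of_isClosed_subset hSc inter_subset_left
  set σ := sInf S with hσ
  have hσS : σ ∈ S := hScp.sInf_mem hSne
  have hφσ : φ σ = x₀ := hσS.2
  have hσ0 : 0 ≤ σ := hσS.1.1
  have hσt : σ ≤ t₀ := hσS.1.2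
  have hσpos : 0 < σ := by
    rcases hσ0.lt_or_eq with h | h
    · exact h
    · exfalso; rw [← h, hφ0] at hφσ; linarith
  have hlt : ∀ t ∈ Ico (0:ℝ) σ, φ t < x₀ := by
    intro t ht
    by_contra hge
    push_neg at hge
    have htt₀ : t ≤ t₀ := ht.2.le.trans hσt
    have h0 : x₀ ∈ Icc (φ 0) (φ t) := ⟨by rw [hφ0]; exact hx₀pos.le, hge⟩
    obtain ⟨r, hr, hφr⟩ := intermediate_value_Icc ht.1
      (hcont.mono (Icc_subset_Icc le_rfl htt₀)) h0
    have hrS : r ∈ S := ⟨⟨hr.1, hr.2.trans htt₀⟩, hφr⟩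
    have : σ ≤ r := csInf_le hScp.bddBelow hrS
    have : r ≤ t := hr.2
    linarith [ht.2]
  have hσT : σ < T := lt_of_le_of_lt hσt ht₀T
  have hφcσ : ContinuousAt φ σ := (hode σ ⟨hσ0, hσT⟩).continuousAt
  have hωc : ContinuousAt ω x₀ := hω.continuousAt (Ici_mem_nhds hx₀pos)
  have hωc' : ContinuousAt ω (φ σ) := by rw [hφσ]; exact hωc
  have hu : ContinuousAt (fun t => φ t - t - ω (φ t)) σ :=
    (hφcσ.sub continuousAt_id).sub (hωc'.comp hφcσ)
  have huσ : ε < φ σ - σ - ω (φ σ) := by rw [hφσ]; linarith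
  have hev : ∀ᶠ t in 𝓝 σ, ε < φ t - t - ω (φ t) :=
    hu.eventually (eventually_gt_nhds huσ)
  obtain ⟨δ, hδpos, hδ⟩ := Metric.eventually_nhds_iff.1 hev
  set t₁ := max (σ - δ/2) (σ/2) with ht₁
  have ht₁pos : 0 < t₁ := lt_max_of_lt_right (by linarith)
  have ht₁lt : t₁ < σ := max_lt (by linarith) (by linarith)
  have hball : ∀ t ∈ Icc t₁ σ, ε < φ t - t - ω (φ t) := by
    intro t ht
    apply hδ
    rw [Real.dist_eq, abs_sub_lt_iff]
    have h5 : σ - δ/2 ≤ t₁ := le_max_left _ _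
    constructor
    · linarith [ht.2]
    · linarith [ht.1]
  have hanti : AntitoneOn φ (Icc t₁ σ) := by
    apply antitoneOn_of_deriv_nonpos (convex_Icc t₁ σ)
    · exact hcont.mono (Icc_subset_Icc (by linarith) hσt)
    · intro t ht
      rw [interior_Icc] at ht
      exact ((hode t ⟨by linarith [ht.1], by linarith [ht.2]⟩).differentiableAt).differentiableWithinAt
    · intro t ht
      rw [interior_Icc] at ht
      rw [(hode t ⟨by linarith [ht.1], by linarith [ht.2]⟩).deriv]
      have h1 : ε < φ t - t - ω (φ t) := hball t ⟨ht.1.le, ht.2.le⟩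
      have h2 : ω (φ t) + t - φ t ≤ -ε := by linarith
      have h3 : ε⁻¹ * (ω (φ t) + t - φ t) ≤ ε⁻¹ * (-ε) :=
        mul_le_mul_of_nonneg_left h2 (by positivity)
      have h4 : ε⁻¹ * (-ε) = -1 := by field_simp
      linarith
  have hge := hanti (left_mem_Icc.2 ht₁lt.le) (right_mem_Icc.2 ht₁lt.le) ht₁lt.le
  rw [hφσ] at hge
  have := hlt t₁ ⟨ht₁pos.le, ht₁lt⟩
  linarith
end

section
/- Let φ solve the CIR IVP on [0,T) and let ε ≤ 1. Then for any fixed level x ≥ 0 and any t ∈ [0,T), if t ≥ sup_{0 ≤ u ≤ x}(u − ω(u)) + ε^{1/2} + ε^{1/2} x, then φ(t) ≥ x. -/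
/-- lower passage-time bound for a CIR IVP solution with `0 < ε ≤ 1`:
for any level `x ≥ 0`, if `t ≥ sup_{0 ≤ u ≤ x}(u − ω(u)) + √ε + √ε · x` then
`φ(t) ≥ x`. -/
theorem cir_ivp_lower_passage (ε T : ℝ) (hε : 0 < ε) (hε1 : ε ≤ 1) (hT : 0 < T)
    (ω φ : ℝ → ℝ) (hω : ContinuousOn ω (Set.Ici 0)) (hω0 : ω 0 = 0)
    (hφ0 : φ 0 = 0)
    (hode : ∀ t ∈ Set.Ico (0:ℝ) T,
      HasDerivAt φ (ε⁻¹ * (ω (φ t) + t - φ t) + 1) t) :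
    ∀ x : ℝ, 0 ≤ x → ∀ t ∈ Set.Ico (0:ℝ) T,
      sSup {y : ℝ | ∃ u ∈ Set.Icc (0:ℝ) x, y = u - ω u}
          + Real.sqrt ε + Real.sqrt ε * x ≤ t →
      x ≤ φ t := by
  intro x hx t ht hst
  obtain ⟨ht0, htT⟩ := ht
  set sε := Real.sqrt ε with hsεdef
  have hsε : 0 < sε := Real.sqrt_pos.mpr hε
  have hsε2 : sε * sε = ε := Real.mul_self_sqrt hε.le
  set S : Set ℝ := {y : ℝ | ∃ u ∈ Set.Icc (0:ℝ) x, y = u - ω u} with hSdef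
  set M : ℝ := sSup S with hMdef
  -- the set S is a compact image, hence bounded above
  have hScont : ContinuousOn (fun u => u - ω u) (Set.Icc (0:ℝ) x) :=
    (continuousOn_id.sub (hω.mono (fun u hu => hu.1)))
  have hSeq : S = (fun u => u - ω u) '' Set.Icc (0:ℝ) x := by
    ext y
    simp only [hSdef, Set.mem_setOf_eq, Set.mem_image]
    constructor
    · rintro ⟨u, hu, rfl⟩; exact ⟨u, hu, rfl⟩
    · rintro ⟨u, hu, rfl⟩; exact ⟨u, hu, rfl⟩
  have hSbdd : BddAbove S := by
    rw [hSeq]; exact (isCompact_Icc.image_of_continuousOn hScont).bddAbove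
  have hMle : ∀ u ∈ Set.Icc (0:ℝ) x, u - ω u ≤ M :=
    fun u hu => le_csSup hSbdd ⟨u, hu, rfl⟩
  have hM0 : 0 ≤ M := by
    have := hMle 0 ⟨le_refl 0, hx⟩
    simpa [hω0] using this
  -- nonnegativity of φ on [0, t]
  have hφcont : ∀ b ∈ Set.Icc (0:ℝ) t, ContinuousOn φ (Set.Icc 0 b) := by
    intro b hb s hs
    exact (hode s ⟨hs.1, lt_of_le_of_lt (hs.2.trans hb.2) htT⟩).continuousAt.continuousWithinAt
  have hφpos : ∀ s ∈ Set.Icc (0:ℝ) t, 0 ≤ φ s := by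
    intro s hs
    have key : ∀ ⦃y⦄, y ∈ Set.Icc (0:ℝ) t → (-φ) y ≤ (fun _ => (0:ℝ)) y := by
      refine image_le_of_deriv_right_lt_deriv_boundary
        (f := fun s => -φ s) (f' := fun s => -(ε⁻¹ * (ω (φ s) + s - φ s) + 1))
        (B := fun _ => (0:ℝ)) (B' := fun _ => (0:ℝ))
        ((hφcont t ⟨ht0, le_refl t⟩).neg) ?_ (by simp [hφ0]) (fun _ => hasDerivAt_const _ _) ?_
      · intro s hs
        exact ((hode s ⟨hs.1, hs.2.trans htT⟩).neg).hasDerivWithinAt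
      · intro s hs hzero
        have hφs : φ s = 0 := by
          have : -φ s = 0 := hzero
          linarith
        simp only [hφs, hω0]
        have hεinv : 0 < ε⁻¹ := inv_pos.mpr hε
        have hs0 : 0 ≤ s := hs.1
        nlinarith
    have := key hs
    simpa using this
  -- main comparison with the line L s = x - sε⁻¹ (t - s)
  set a : ℝ := M + sε with hadef
  have ha0 : 0 ≤ a := by positivity
  have hat : a + sε * x ≤ t := by
    simpa [hadef, add_assoc] using hst
  have hale : a ≤ t := by nlinarith
  set L : ℝ → ℝ := fun s => x - sε⁻¹ * (t - s) with hLdef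
  have hL' : ∀ s, HasDerivAt L sε⁻¹ s := by
    intro s
    have : HasDerivAt (fun s : ℝ => x - sε⁻¹ * (t - s)) (-(sε⁻¹ * (0 - 1))) s := by
      exact (((hasDerivAt_const s t).sub (hasDerivAt_id s)).const_mul sε⁻¹).const_sub x
    simpa using this
  have key : ∀ ⦃y⦄, y ∈ Set.Icc a t → L y ≤ φ y := by
    refine image_le_of_deriv_right_lt_deriv_boundary'
      (f := L) (f' := fun _ => sε⁻¹)
      (B := φ) (B' := fun s => ε⁻¹ * (ω (φ s) + s - φ s) + 1)
      ?_ (fun s _ => (hL' s).hasDerivWithinAt) ?_ ?_ ?_ ?_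
    · exact ((continuous_const.sub (continuous_const.mul
        (continuous_const.sub continuous_id))).continuousOn)
    · -- L a ≤ φ a
      have h1 : sε⁻¹ * (sε * x) = x := by
        rw [← mul_assoc, inv_mul_cancel₀ hsε.ne', one_mul]
      have h2 : sε * x ≤ t - a := by linarith
      have h3 : sε⁻¹ * (sε * x) ≤ sε⁻¹ * (t - a) :=
        mul_le_mul_of_nonneg_left h2 (inv_pos.mpr hsε).le
      have h4 : 0 ≤ φ a := hφpos a ⟨ha0, hale⟩
      simp only [hLdef]
      linarith [h1 ▸ h3]
    · exact (hφcont t ⟨ht0, le_refl t⟩).mono (Set.Icc_subset_Icc_left ha0)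
    · intro s hs
      exact (hode s ⟨ha0.trans hs.1, hs.2.trans htT⟩).hasDerivWithinAt
    · intro s hs heq
      have hs0 : 0 ≤ s := ha0.trans hs.1
      have hφs0 : 0 ≤ φ s := hφpos s ⟨hs0, hs.2.le⟩
      have hφsx : φ s ≤ x := by
        have : sε⁻¹ * (t - s) ≥ 0 := by
          apply mul_nonneg (inv_pos.mpr hsε).le; linarith [hs.2]
        have : L s ≤ x := by simp only [hLdef]; linarith
        linarith [heq ▸ this]
      have hMb : φ s - ω (φ s) ≤ M := hMle (φ s) ⟨hφs0, hφsx⟩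
      have hlow : sε ≤ ω (φ s) + s - φ s := by
        have : a ≤ s := hs.1
        simp only [hadef] at this
        linarith
      have hεinv : 0 < ε⁻¹ := inv_pos.mpr hε
      have h5 : ε⁻¹ * sε = sε⁻¹ := by
        rw [← hsε2]
        field_simp
      have h6 : ε⁻¹ * sε ≤ ε⁻¹ * (ω (φ s) + s - φ s) :=
        mul_le_mul_of_nonneg_left hlow hεinv.le
      rw [h5] at h6
      linarith
  have := key (Set.right_mem_Icc.mpr hale)
  simpa [hLdef] using this
end
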